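/- For every alternating path P between endpoints s₁ and s₂ (each of which is a row strategy or a column profile), there exists an alternating path P' between the same endpoints with Cost(P') ≤ Cost(P) on which every row strategy appears at most once; consequently, there is a minimum-cost alternating path between s₁ and s₂ of length at most 2m, where m is the number of row-player strategies. -/

import Mathlib

open Finset

/-- Reward needed to incentivize the row player to play `i'` when the columns play `𝒞`. -/
noncomputable def Trow {m n k : ℕ} [NeZero m] (R : Fin m → Fin n → ℝ)
    (𝒞 : Fin k → Fin n) (i' : Fin m) : ℝ :=
  (univ.sup' univ_nonempty fun i => ∑ j, R i (𝒞 j)) - ∑ j, R i' (𝒞 j)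

/-- Reward needed to incentivize the column players to play `𝒞'` when the row plays `i`. -/
noncomputable def Tcol {m n k : ℕ} [NeZero n] (C : Fin m → Fin n → ℝ)
    (i : Fin m) (𝒞' : Fin k → Fin n) : ℝ :=
  k * (univ.sup' univ_nonempty fun q => C i q) - ∑ j, C i (𝒞' j)

/-- A vertex of an alternating path: a row strategy or a column profile. -/
abbrev AltVert (m n k : ℕ) := Fin m ⊕ (Fin k → Fin n)

/-- Weight of a step of an alternating path. -/
noncomputable def altWeight {m n k : ℕ} [NeZero m] [NeZero n] (R C : Fin m → Fin n → ℝ) :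
    AltVert m n k → AltVert m n k → ℝ
  | Sum.inl r, Sum.inr c => Tcol C r c
  | Sum.inr c, Sum.inl r => Trow R c r
  | _, _ => 0

/-- `v 0, v 1, …, v L` is an alternating path: row strategies and column profiles alternate. -/
def IsAlt {m n k : ℕ} (v : ℕ → AltVert m n k) (L : ℕ) : Prop :=
  ∀ t < L, (v t).isLeft ≠ (v (t+1)).isLeft

/-- Cost of the alternating path `v 0, v 1, …, v L`. -/
noncomputable def altCost {m n k : ℕ} [NeZero m] [NeZero n] (R C : Fin m → Fin n → ℝ)
    (v : ℕ → AltVert m n k) (L : ℕ) : ℝ :=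
  ∑ t ∈ Finset.range L, altWeight R C (v t) (v (t+1))

/-!
All step weights are nonnegative, so cutting a closed loop `v t = v (t + d)` out of a path keeps
its endpoints and alternation and does not increase its cost; repeating this until no vertex
repeats yields a simple path. On an alternating path every other vertex is a row strategy, so a
path of length `> 2m` repeats one. Hence the costs of all paths between two endpoints are bounded
below by the costs of paths of length `≤ 2m`; these form a finite set (a cost only depends on
the first `L + 1` vertices), whose minimum is the least cost.
-/

section LoopErasure

variable {α : Type*}

/-- The walk `v` with the closed loop `v t, …, v (t + d)` cut out. -/
def cutLoop (v : ℕ → α) (t d : ℕ) : ℕ → α := fun s => if s ≤ t then v s else v (s + d)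

/-- Step `s` of `cutLoop v t d` is step `skipLoop t d s` of `v`. -/
def skipLoop (t d s : ℕ) : ℕ := if s < t then s else s + d

variable {v : ℕ → α} {t d L : ℕ}

lemma cutLoop_step (hloop : v t = v (t + d)) (s : ℕ) :
    cutLoop v t d s = v (skipLoop t d s) ∧ cutLoop v t d (s + 1) = v (skipLoop t d s + 1) := by
  unfold cutLoop skipLoop
  rcases lt_trichotomy s t with hs | rfl | hs
  · simp [hs, hs.le, Nat.succ_le_of_lt hs]
  · simp [hloop, Nat.add_right_comm]
  · simp [hs.not_gt, hs.not_ge, (Nat.lt_succ_of_lt hs).not_ge, Nat.add_right_comm]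

lemma skipLoop_lt (htd : t + d ≤ L) {s : ℕ} (hs : s < L - d) : skipLoop t d s < L := by
  unfold skipLoop; split_ifs <;> omega

lemma skipLoop_injective : Function.Injective (skipLoop t d) := by
  intro s s' h
  unfold skipLoop at h
  split_ifs at h <;> omega

lemma cutLoop_chain {r : α → α → Prop} (hloop : v t = v (t + d)) (htd : t + d ≤ L)
    (hv : ∀ s < L, r (v s) (v (s + 1))) :
    ∀ s < L - d, r (cutLoop v t d s) (cutLoop v t d (s + 1)) := fun s hs => by
  obtain ⟨h₀, h₁⟩ := cutLoop_step hloop s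
  exact h₀ ▸ h₁ ▸ hv _ (skipLoop_lt htd hs)

lemma sum_cutLoop_le {w : α → α → ℝ} (hw : ∀ a b, 0 ≤ w a b) (hloop : v t = v (t + d))
    (htd : t + d ≤ L) :
    ∑ s ∈ range (L - d), w (cutLoop v t d s) (cutLoop v t d (s + 1)) ≤
      ∑ s ∈ range L, w (v s) (v (s + 1)) := by
  classical
  calc ∑ s ∈ range (L - d), w (cutLoop v t d s) (cutLoop v t d (s + 1))
      = ∑ s ∈ (range (L - d)).image (skipLoop t d), w (v s) (v (s + 1)) := by
        rw [sum_image skipLoop_injective.injOn]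
        exact sum_congr rfl fun s _ => by rw [(cutLoop_step hloop s).1, (cutLoop_step hloop s).2]
    _ ≤ ∑ s ∈ range L, w (v s) (v (s + 1)) := by
        refine sum_le_sum_of_subset_of_nonneg ?_ fun _ _ _ => hw _ _
        intro s hs
        obtain ⟨s', hs', rfl⟩ := mem_image.1 hs
        exact mem_range.2 (skipLoop_lt htd (mem_range.1 hs'))

lemma cutLoop_zero : cutLoop v t d 0 = v 0 := if_pos (Nat.zero_le t)

lemma cutLoop_sub (hloop : v t = v (t + d)) (htd : t + d ≤ L) :
    cutLoop v t d (L - d) = v L := by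
  unfold cutLoop
  split_ifs with h
  · rw [show L - d = t by omega, hloop, show t + d = L by omega]
  · rw [Nat.sub_add_cancel (by omega)]

theorem exists_injOn_walk_sum_le {r : α → α → Prop} {w : α → α → ℝ} (hw : ∀ a b, 0 ≤ w a b)
    (L : ℕ) (v : ℕ → α) (hv : ∀ s < L, r (v s) (v (s + 1))) :
    ∃ (L' : ℕ) (v' : ℕ → α), (∀ s < L', r (v' s) (v' (s + 1))) ∧ v' 0 = v 0 ∧ v' L' = v L ∧
      ∑ s ∈ range L', w (v' s) (v' (s + 1)) ≤ ∑ s ∈ range L, w (v s) (v (s + 1)) ∧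
      Set.InjOn v' (Set.Iic L') := by
  induction L using Nat.strong_induction_on generalizing v with
  | _ L ih =>
  by_cases hinj : Set.InjOn v (Set.Iic L)
  · exact ⟨L, v, hv, rfl, rfl, le_rfl, hinj⟩
  obtain ⟨t, d, hd, htd, hloop⟩ : ∃ t d, 0 < d ∧ t + d ≤ L ∧ v t = v (t + d) := by
    simp only [Set.InjOn, Set.mem_Iic, not_forall] at hinj
    obtain ⟨a, ha, b, hb, hab, hne⟩ := hinj
    rcases Nat.lt_or_gt_of_ne hne with h | h
    · exact ⟨a, b - a, by omega, by omega, by rwa [Nat.add_sub_cancel' h.le]⟩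
    · exact ⟨b, a - b, by omega, by omega, by rw [Nat.add_sub_cancel' h.le, hab]⟩
  obtain ⟨L', v', hv', h0, hL, hcost, hinj'⟩ :=
    ih (L - d) (by omega) (cutLoop v t d) (cutLoop_chain hloop htd hv)
  exact ⟨L', v', hv', h0.trans cutLoop_zero, hL.trans (cutLoop_sub hloop htd),
    hcost.trans (sum_cutLoop_le hw hloop htd), hinj'⟩

end LoopErasure

section AlternatingPaths

variable {m n k : ℕ}

lemma Trow_nonneg [NeZero m] (R : Fin m → Fin n → ℝ) (𝒞 : Fin k → Fin n) (i' : Fin m) :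
    0 ≤ Trow R 𝒞 i' :=
  sub_nonneg.2 (le_sup' (fun i => ∑ j, R i (𝒞 j)) (mem_univ i'))

lemma Tcol_nonneg [NeZero n] (C : Fin m → Fin n → ℝ) (i : Fin m) (𝒞' : Fin k → Fin n) :
    0 ≤ Tcol C i 𝒞' := by
  refine sub_nonneg.2 ?_
  calc ∑ j, C i (𝒞' j) ≤ ∑ _j : Fin k, univ.sup' univ_nonempty (C i) :=
        sum_le_sum fun j _ => le_sup' (C i) (mem_univ (𝒞' j))
    _ = k * univ.sup' univ_nonempty (C i) := by simp

lemma altWeight_nonneg [NeZero m] [NeZero n] (R C : Fin m → Fin n → ℝ) (a b : AltVert m n k) :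
    0 ≤ altWeight R C a b := by
  cases a <;> cases b <;> simp [altWeight, Trow_nonneg, Tcol_nonneg]

lemma IsAlt.exists_inl {v : ℕ → AltVert m n k} {L s : ℕ} (hv : IsAlt v L) (hs : s < L) :
    ∃ u, (u = s ∨ u = s + 1) ∧ ∃ i, v u = Sum.inl i := by
  have := hv s hs
  rcases hvs : v s with i | c
  · exact ⟨s, .inl rfl, i, hvs⟩
  · rcases hvs' : v (s + 1) with i | c'
    · exact ⟨s + 1, .inr rfl, i, hvs'⟩
    · simp [hvs, hvs'] at this

/-- Alternation puts a row strategy at position `2j` or `2j + 1` for each `j ≤ m`, so a path of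
length `> 2m` repeats one. -/
lemma IsAlt.le_two_mul_of_rows_distinct {v : ℕ → AltVert m n k} {L : ℕ} (hv : IsAlt v L)
    (hrows : ∀ t ≤ L, ∀ t' ≤ L, ∀ i : Fin m, v t = Sum.inl i → v t' = Sum.inl i → t = t') :
    L ≤ 2 * m := by
  by_contra! hL
  have : ∀ j : Fin (m + 1), ∃ u, (u = 2 * (j : ℕ) ∨ u = 2 * (j : ℕ) + 1) ∧ ∃ i, v u = Sum.inl i :=
    fun j => hv.exists_inl (by omega)
  choose u hu row hrow using this
  have hinj : Function.Injective row := fun j j' h => by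
    have := hu j
    have := hu j'
    have := hrows _ (by omega) _ (by omega) _ (hrow j) (h ▸ hrow j')
    exact Fin.ext (by omega)
  simpa using Fintype.card_le_of_injective row hinj

lemma IsAlt.exists_rows_distinct_altCost_le [NeZero m] [NeZero n] (R C : Fin m → Fin n → ℝ)
    {L : ℕ} {v : ℕ → AltVert m n k} (hv : IsAlt v L) :
    ∃ (L' : ℕ) (v' : ℕ → AltVert m n k),
      IsAlt v' L' ∧ v' 0 = v 0 ∧ v' L' = v L ∧ altCost R C v' L' ≤ altCost R C v L ∧
      (∀ t ≤ L', ∀ t' ≤ L', ∀ i : Fin m, v' t = Sum.inl i → v' t' = Sum.inl i → t = t') := by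
  obtain ⟨L', v', hv', h0, hL, hcost, hinj⟩ :=
    exists_injOn_walk_sum_le (r := fun a b : AltVert m n k => a.isLeft ≠ b.isLeft)
      (altWeight_nonneg R C) L v hv
  exact ⟨L', v', hv', h0, hL, hcost, fun t ht t' ht' i h h' => hinj ht ht' (h.trans h'.symm)⟩

lemma altCost_congr [NeZero m] [NeZero n] (R C : Fin m → Fin n → ℝ)
    {v v' : ℕ → AltVert m n k} {L : ℕ} (h : ∀ s ≤ L, v s = v' s) : altCost R C v L = altCost R C v' L :=
  sum_congr rfl fun s hs => by
    rw [h s (by simp at hs; omega), h (s + 1) (by simp at hs; omega)]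

lemma finite_setOf_altCost [NeZero m] [NeZero n] (R C : Fin m → Fin n → ℝ) (N : ℕ) :
    {x | ∃ L ≤ N, ∃ v : ℕ → AltVert m n k, x = altCost R C v L}.Finite := by
  refine (Set.finite_range fun p : Fin (N + 1) × (Fin (N + 1) → AltVert m n k) =>
    altCost R C (fun s => p.2 (Fin.ofNat (N + 1) s)) p.1).subset ?_
  rintro x ⟨L, hL, v, rfl⟩
  refine ⟨(Fin.ofNat (N + 1) L, fun s => v s), ?_⟩
  simp only [Fin.val_ofNat, Nat.mod_eq_of_lt (Nat.lt_succ_of_le hL)]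
  exact altCost_congr R C fun s hs => by
    simp only [Nat.mod_eq_of_lt (by omega : s < N + 1)]

end AlternatingPaths

/-- Every alternating path can be replaced, keeping its endpoints and without increasing its
cost, by one on which every row strategy appears at most once; consequently, between any two
endpoints there is a minimum-cost alternating path of length at most `2m`. -/
theorem alternating_path_row_strategies_distinct_and_min_length
    (m n k : ℕ) [NeZero m] [NeZero n]
    (R C : Fin m → Fin n → ℝ) :
    (∀ (L : ℕ) (v : ℕ → AltVert m n k), IsAlt v L →
      ∃ (L' : ℕ) (v' : ℕ → AltVert m n k),
        IsAlt v' L' ∧ v' 0 = v 0 ∧ v' L' = v L ∧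
        altCost R C v' L' ≤ altCost R C v L ∧
        (∀ t ≤ L', ∀ t' ≤ L', ∀ i : Fin m, v' t = Sum.inl i → v' t' = Sum.inl i → t = t')) ∧
    (∀ s₁ s₂ : AltVert m n k,
      (∃ (L : ℕ) (v : ℕ → AltVert m n k), IsAlt v L ∧ v 0 = s₁ ∧ v L = s₂) →
      ∃ (L : ℕ) (v : ℕ → AltVert m n k),
        IsAlt v L ∧ v 0 = s₁ ∧ v L = s₂ ∧ L ≤ 2 * m ∧
        IsLeast {x | ∃ (L' : ℕ) (v' : ℕ → AltVert m n k),
            IsAlt v' L' ∧ v' 0 = s₁ ∧ v' L' = s₂ ∧ x = altCost R C v' L'}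
          (altCost R C v L)) := by
  refine ⟨fun L v hv => hv.exists_rows_distinct_altCost_le R C, ?_⟩
  rintro s₁ s₂ ⟨L₀, v₀, hv₀, rfl, rfl⟩
  set short := {x | ∃ L ≤ 2 * m, ∃ v : ℕ → AltVert m n k,
    IsAlt v L ∧ v 0 = v₀ 0 ∧ v L = v₀ L₀ ∧ x = altCost R C v L}
  have below : ∀ L v, IsAlt v L → v 0 = v₀ 0 → v L = v₀ L₀ → ∃ y ∈ short, y ≤ altCost R C v L :=
    fun L v hv h0 hL => by
      obtain ⟨L', v', hv', h0', hL', hcost, hrows⟩ := hv.exists_rows_distinct_altCost_le R C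
      exact ⟨_, ⟨L', hv'.le_two_mul_of_rows_distinct hrows, v', hv', h0'.trans h0,
        hL'.trans hL, rfl⟩, hcost⟩
  have hfin : short.Finite := (finite_setOf_altCost R C (2 * m)).subset
    fun x ⟨L, hL, v, _, _, _, hx⟩ => ⟨L, hL, v, hx⟩
  obtain ⟨y, hy, -⟩ := below L₀ v₀ hv₀ rfl rfl
  obtain ⟨x, ⟨L, hL, v, hv, h0, hL', rfl⟩, hmin⟩ := Set.exists_min_image short id hfin ⟨y, hy⟩
  refine ⟨L, v, hv, h0, hL', hL, ⟨L, v, hv, h0, hL', rfl⟩, ?_⟩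
  rintro _ ⟨L₁, v₁, hv₁, h0₁, hL₁, rfl⟩
  obtain ⟨z, hz, hzle⟩ := below L₁ v₁ hv₁ h0₁ hL₁
  exact (hmin z hz).trans hzle
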